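/- arXiv:math/9801116 — 6 statements merged into one kernel-verified Lean document; each statement's English description precedes it below -/
import Mathlib

section
/- The element c = D₁(Q₂₃) - D₂(Q₁₃) + D₃(Q₁₂) satisfies ad c = 0, i.e. c·a = a·c for all a ∈ A. (In other words, the full alternation of D_k(Q_{ij}) over i,j,k lies in the center of A.) -/
theorem stmt_3 {A : Type*} [Ring A] [Algebra ℂ A]
    (D₁ D₂ D₃ : A →ₗ[ℂ] A)
    (hD₁ : ∀ x y : A, D₁ (x * y) = D₁ x * y + x * D₁ y)
    (hD₂ : ∀ x y : A, D₂ (x * y) = D₂ x * y + x * D₂ y)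
    (hD₃ : ∀ x y : A, D₃ (x * y) = D₃ x * y + x * D₃ y)
    (Q₁₂ Q₁₃ Q₂₃ : A)
    (h₁₂ : ∀ a : A, D₁ (D₂ a) - D₂ (D₁ a) = Q₁₂ * a - a * Q₁₂)
    (h₁₃ : ∀ a : A, D₁ (D₃ a) - D₃ (D₁ a) = Q₁₃ * a - a * Q₁₃)
    (h₂₃ : ∀ a : A, D₂ (D₃ a) - D₃ (D₂ a) = Q₂₃ * a - a * Q₂₃) :
    ∀ a : A, (D₁ Q₂₃ - D₂ Q₁₃ + D₃ Q₁₂) * a = a * (D₁ Q₂₃ - D₂ Q₁₃ + D₃ Q₁₂) := by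
  intro a
  have A1 : D₁ (D₂ (D₃ a)) - D₁ (D₃ (D₂ a))
      = D₁ Q₂₃ * a + Q₂₃ * D₁ a - (D₁ a * Q₂₃ + a * D₁ Q₂₃) := by
    have := congrArg D₁ (h₂₃ a)
    simpa [map_sub, hD₁] using this
  have A2 : D₂ (D₁ (D₃ a)) - D₂ (D₃ (D₁ a))
      = D₂ Q₁₃ * a + Q₁₃ * D₂ a - (D₂ a * Q₁₃ + a * D₂ Q₁₃) := by
    have := congrArg D₂ (h₁₃ a)
    simpa [map_sub, hD₂] using this
  have A3 : D₃ (D₁ (D₂ a)) - D₃ (D₂ (D₁ a))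
      = D₃ Q₁₂ * a + Q₁₂ * D₃ a - (D₃ a * Q₁₂ + a * D₃ Q₁₂) := by
    have := congrArg D₃ (h₁₂ a)
    simpa [map_sub, hD₃] using this
  have B1 := h₂₃ (D₁ a)
  have B2 := h₁₃ (D₂ a)
  have B3 := h₁₂ (D₃ a)
  linear_combination (norm := noncomm_ring) B1 - A1 + A2 - B2 + B3 - A3
end

section
/- The bilinear map Ψ₂(a,b) = Tr(D(a)·b) - Tr(D(b)·a) is an antisymmetric 2-cocycle on the Lie algebra A: Ψ₂(a,b) = -Ψ₂(b,a), and Ψ₂([a,b],c) - Ψ₂([a,c],b) + Ψ₂([b,c],a) = 0 for all a, b, c ∈ A, where [a,b] = ab - ba. -/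
theorem stmt_4 {A : Type*} [Ring A] [Algebra ℂ A]
    (Tr : A →ₗ[ℂ] ℂ) (hTr : ∀ x y : A, Tr (x * y) = Tr (y * x))
    (D : A →ₗ[ℂ] A) (hD : ∀ x y : A, D (x * y) = D x * y + x * D y)
    (hTD : ∀ a : A, Tr (D a) = 0) :
    (∀ a b : A, Tr (D a * b) - Tr (D b * a) = -(Tr (D b * a) - Tr (D a * b))) ∧
    (∀ a b c : A,
      (Tr (D (a * b - b * a) * c) - Tr (D c * (a * b - b * a)))
        - (Tr (D (a * c - c * a) * b) - Tr (D b * (a * c - c * a)))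
        + (Tr (D (b * c - c * b) * a) - Tr (D a * (b * c - c * b))) = 0) := by
  have hc1 : ∀ x y z : A, Tr (x * D y * z) = Tr (D y * (z * x)) := by
    intro x y z
    rw [mul_assoc, hTr, mul_assoc]
  have h3 : ∀ x y z : A, Tr (D x * (y * z)) + Tr (D y * (z * x)) + Tr (D z * (x * y)) = 0 := by
    intro x y z
    have h := hTD (x * (y * z))
    rw [hD, hD, mul_add, map_add, map_add, hTr x (y * D z), mul_assoc, hTr y (D z * x),
      mul_assoc, ← mul_assoc x (D y) z, hc1] at h
    linear_combination h
  have h2 : ∀ x y : A, Tr (D x * y) + Tr (D y * x) = 0 := by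
    intro x y
    have h := hTD (x * y)
    rw [hD, map_add, hTr x (D y)] at h
    linear_combination h
  have hExp : ∀ x y z : A, Tr (D (x * y - y * x) * z) =
      Tr (D x * (y * z)) + Tr (D y * (z * x)) - Tr (D y * (x * z)) - Tr (D x * (z * y)) := by
    intro x y z
    rw [map_sub, hD, hD, sub_mul, add_mul, add_mul, map_sub, map_add, map_add, hc1, hc1,
      mul_assoc, mul_assoc]
    ring
  constructor
  · intro a b; ring
  · intro a b c
    have k1 := h2 (a * b - b * a) c
    have k2 := h2 (a * c - c * a) b
    have k3 := h2 (b * c - c * b) a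
    have e1 := h3 a b c
    have e2 := h3 b a c
    rw [hExp a b c, hExp a c b, hExp b c a] at *
    linear_combination 4 * e1 - 4 * e2 - k1 + k2 - k3
end

section
/- The expression S(a₁,a₂,a₃,a₄) = Alt_{A,D} [ Tr(D₁(a₁)·D₂(a₂)·a₃·a₄) + Tr(D₁(a₁)·a₂·a₃·D₂(a₄)) ] vanishes identically, where Alt_{A,D} denotes full antisymmetrization over the four arguments a₁,…,a₄ (with signs) combined with antisymmetrization over the pair (D₁,D₂). -/
theorem stmt_7 {A : Type*} [Ring A] [Algebra ℂ A]
    (Tr : A →ₗ[ℂ] ℂ) (hTr : ∀ x y : A, Tr (x * y) = Tr (y * x))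
    (D₁ D₂ : A →ₗ[ℂ] A)
    (hD₁ : ∀ x y : A, D₁ (x * y) = D₁ x * y + x * D₁ y)
    (hD₂ : ∀ x y : A, D₂ (x * y) = D₂ x * y + x * D₂ y)
    (hcomm : ∀ a : A, D₁ (D₂ a) = D₂ (D₁ a))
    (hTD₁ : ∀ a : A, Tr (D₁ a) = 0) (hTD₂ : ∀ a : A, Tr (D₂ a) = 0) :
    ∀ a₁ a₂ a₃ a₄ : A,
      ∑ σ : Equiv.Perm (Fin 4), ((Equiv.Perm.sign σ : ℤ) : ℂ) *
        ((Tr (D₁ (![a₁, a₂, a₃, a₄] (σ 0)) * D₂ (![a₁, a₂, a₃, a₄] (σ 1)) *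
            ![a₁, a₂, a₃, a₄] (σ 2) * ![a₁, a₂, a₃, a₄] (σ 3)) +
          Tr (D₁ (![a₁, a₂, a₃, a₄] (σ 0)) * ![a₁, a₂, a₃, a₄] (σ 1) *
            ![a₁, a₂, a₃, a₄] (σ 2) * D₂ (![a₁, a₂, a₃, a₄] (σ 3)))) -
         (Tr (D₂ (![a₁, a₂, a₃, a₄] (σ 0)) * D₁ (![a₁, a₂, a₃, a₄] (σ 1)) *
            ![a₁, a₂, a₃, a₄] (σ 2) * ![a₁, a₂, a₃, a₄] (σ 3)) +
          Tr (D₂ (![a₁, a₂, a₃, a₄] (σ 0)) * ![a₁, a₂, a₃, a₄] (σ 1) *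
            ![a₁, a₂, a₃, a₄] (σ 2) * D₁ (![a₁, a₂, a₃, a₄] (σ 3))))) = 0 := by
  intro a₁ a₂ a₃ a₄
  set v : Fin 4 → A := ![a₁, a₂, a₃, a₄] with hv
  -- the Leibniz identity for D₂ applied to a 4-fold product with D₁ in front
  have leib : ∀ x y z w : A,
      Tr (D₂ (D₁ x) * y * z * w) + Tr (D₁ x * D₂ y * z * w)
        + Tr (D₁ x * y * D₂ z * w) + Tr (D₁ x * y * z * D₂ w) = 0 := by
    intro x y z w
    have h := hTD₂ (D₁ x * y * z * w)
    rw [hD₂, hD₂, hD₂, add_mul, add_mul, add_mul, map_add, map_add, map_add] at h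
    linear_combination h
  have leib' : ∀ x y z w : A,
      Tr (D₁ (D₂ x) * y * z * w) + Tr (D₂ x * D₁ y * z * w)
        + Tr (D₂ x * y * D₁ z * w) + Tr (D₂ x * y * z * D₁ w) = 0 := by
    intro x y z w
    have h := hTD₁ (D₂ x * y * z * w)
    rw [hD₁, hD₁, hD₁, add_mul, add_mul, add_mul, map_add, map_add, map_add] at h
    linear_combination h
  have key : ∀ x y z w : A,
      ((Tr (D₁ x * D₂ y * z * w) + Tr (D₁ x * y * z * D₂ w))
        - (Tr (D₂ x * D₁ y * z * w) + Tr (D₂ x * y * z * D₁ w)))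
      = -(Tr (D₁ x * y * D₂ z * w) - Tr (D₂ x * y * D₁ z * w)) := by
    intro x y z w
    have h1 := leib x y z w
    have h2 := leib' x y z w
    rw [hcomm] at h2
    linear_combination h1 - h2
  have cyc : ∀ x y z w : A, Tr (D₁ x * y * D₂ z * w) = Tr (D₂ z * w * D₁ x * y) := by
    intro x y z w
    rw [mul_assoc (D₁ x * y), hTr, ← mul_assoc]
  have cyc' : ∀ x y z w : A, Tr (D₂ x * y * D₁ z * w) = Tr (D₁ z * w * D₂ x * y) := by
    intro x y z w
    rw [mul_assoc (D₂ x * y), hTr, ← mul_assoc]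
  set g : Equiv.Perm (Fin 4) → ℂ := fun σ =>
    ((Equiv.Perm.sign σ : ℤ) : ℂ) *
      (Tr (D₁ (v (σ 0)) * v (σ 1) * D₂ (v (σ 2)) * v (σ 3))
        - Tr (D₂ (v (σ 0)) * v (σ 1) * D₁ (v (σ 2)) * v (σ 3))) with hg
  have step1 : ∑ σ : Equiv.Perm (Fin 4), ((Equiv.Perm.sign σ : ℤ) : ℂ) *
        ((Tr (D₁ (v (σ 0)) * D₂ (v (σ 1)) * v (σ 2) * v (σ 3)) +
          Tr (D₁ (v (σ 0)) * v (σ 1) * v (σ 2) * D₂ (v (σ 3)))) -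
         (Tr (D₂ (v (σ 0)) * D₁ (v (σ 1)) * v (σ 2) * v (σ 3)) +
          Tr (D₂ (v (σ 0)) * v (σ 1) * v (σ 2) * D₁ (v (σ 3)))))
      = -∑ σ : Equiv.Perm (Fin 4), g σ := by
    rw [← Finset.sum_neg_distrib]
    refine Finset.sum_congr rfl fun σ _ => ?_
    rw [key (v (σ 0)) (v (σ 1)) (v (σ 2)) (v (σ 3))]
    simp only [hg]
    ring
  rw [step1, neg_eq_zero]
  -- now show ∑ g = 0 by the involution σ ↦ σ * e with e = (0 2)(1 3)
  set e : Equiv.Perm (Fin 4) := Equiv.swap 0 2 * Equiv.swap 1 3 with he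
  have hsign : Equiv.Perm.sign e = 1 := by decide
  have he0 : e 0 = 2 := by decide
  have he1 : e 1 = 3 := by decide
  have he2 : e 2 = 0 := by decide
  have he3 : e 3 = 1 := by decide
  have hneg : ∀ σ : Equiv.Perm (Fin 4), g (σ * e) = -g σ := by
    intro σ
    simp only [hg, Equiv.Perm.mul_apply, he0, he1, he2, he3, map_mul, hsign, mul_one]
    rw [cyc (v (σ 2)) (v (σ 3)) (v (σ 0)) (v (σ 1)),
      cyc' (v (σ 2)) (v (σ 3)) (v (σ 0)) (v (σ 1))]
    ring
  have hrel : ∑ σ : Equiv.Perm (Fin 4), g σ = -∑ σ : Equiv.Perm (Fin 4), g σ := by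
    conv_lhs => rw [← Equiv.sum_comp (Equiv.mulRight e) g]
    simp only [Equiv.coe_mulRight]
    rw [← Finset.sum_neg_distrib]
    exact Finset.sum_congr rfl fun σ _ => hneg σ
  linear_combination hrel / 2
end

section
/- The trilinear alternating map Ψ₃(a₁,a₂,a₃) = Alt_{A,D} Tr(D₁(a₁)·D₂(a₂)·a₃) is a 3-cocycle on the Lie algebra A with bracket [a,b] = ab - ba; that is, for all x₁, x₂, x₃, x₄ ∈ A, Σ_{1 ≤ i < j ≤ 4} (-1)^{i+j} Ψ₃([x_i,x_j], x₁, …, x̂_i, …, x̂_j, …, x₄) = 0. -/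
/-- The trilinear map `Ψ₃(a₁,a₂,a₃) = Alt_{A,D} Tr(D₁(a₁)·D₂(a₂)·a₃)`. -/
noncomputable def Psi3 {A : Type*} [Ring A] [Algebra ℂ A]
    (Tr : A →ₗ[ℂ] ℂ) (D₁ D₂ : A →ₗ[ℂ] A) (a₁ a₂ a₃ : A) : ℂ :=
  ∑ σ : Equiv.Perm (Fin 3), ((Equiv.Perm.sign σ : ℤ) : ℂ) *
    (Tr (D₁ (![a₁, a₂, a₃] (σ 0)) * D₂ (![a₁, a₂, a₃] (σ 1)) * ![a₁, a₂, a₃] (σ 2)) -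
     Tr (D₂ (![a₁, a₂, a₃] (σ 0)) * D₁ (![a₁, a₂, a₃] (σ 1)) * ![a₁, a₂, a₃] (σ 2)))

/-!
Put `φ(a₀, a₁, a₂) = Tr (a₀ (D₁a₁ D₂a₂ - D₂a₁ D₁a₂))`, Connes' cyclic 2-cocycle of the pair of
derivations. The Leibniz rule and the trace property make `φ` a Hochschild cocycle, `bφ = 0`;
integrating by parts (`Tr ∘ Dᵢ = 0`) and using `D₁D₂ = D₂D₁` make it cyclic,
`φ(a₀, a₁, a₂) = φ(a₂, a₀, a₁)`. By cyclicity `Ψ₃(a, b, c) = 3 (φ(a, b, c) - φ(a, c, b))`, so the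
Lie coboundary of `Ψ₃` is, up to a factor, the antisymmetrization over `S₄` of
`φ(x₁x₂, x₃, x₄)`. The 24 permutations split into six orbits under rotation of `(x₁, …, x₄)`,
and by cyclicity the signed sum over each orbit is `bφ(x₁, x₂, x₃, x₄) = 0`.
-/

theorem Equiv.Perm.sum_fin_three_sign_mul {R : Type*} [CommRing R]
    (f : Fin 3 → Fin 3 → Fin 3 → R) :
    ∑ σ : Perm (Fin 3), ((sign σ : ℤ) : R) * f (σ 0) (σ 1) (σ 2) =
      f 0 1 2 - f 1 0 2 - f 2 1 0 - f 0 2 1 + f 1 2 0 + f 2 0 1 := by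
  rw [show (Finset.univ : Finset (Perm (Fin 3))) =
    {1, swap 0 1, swap 0 2, swap 1 2, swap 0 1 * swap 1 2, swap 1 2 * swap 0 1} by decide]
  simp +decide [Finset.sum_insert, swap_apply_of_ne_of_ne, sub_eq_add_neg, add_assoc]

section DerivPairCocycle

variable {R A : Type*} [CommRing R] [Ring A] [Module R A]

theorem trace_deriv_mul_eq_neg (Tr : A →ₗ[R] R) (D : A →ₗ[R] A)
    (hD : ∀ x y : A, D (x * y) = D x * y + x * D y) (hTD : ∀ a : A, Tr (D a) = 0) (a b : A) :
    Tr (D a * b) = -Tr (a * D b) := by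
  rw [eq_neg_iff_add_eq_zero, ← map_add, ← hD, hTD]

variable (Tr : A →ₗ[R] R) (D₁ D₂ : A →ₗ[R] A)

def derivPairCocycle (a₀ a₁ a₂ : A) : R :=
  Tr (a₀ * (D₁ a₁ * D₂ a₂ - D₂ a₁ * D₁ a₂))

theorem derivPairCocycle_sub_left (a b c d : A) :
    derivPairCocycle Tr D₁ D₂ (a - b) c d =
      derivPairCocycle Tr D₁ D₂ a c d - derivPairCocycle Tr D₁ D₂ b c d := by
  simp only [derivPairCocycle, sub_mul, map_sub]

variable {Tr D₁ D₂}

theorem derivPairCocycle_rotate (hTr : ∀ x y : A, Tr (x * y) = Tr (y * x))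
    (hD₁ : ∀ x y : A, D₁ (x * y) = D₁ x * y + x * D₁ y)
    (hD₂ : ∀ x y : A, D₂ (x * y) = D₂ x * y + x * D₂ y)
    (hcomm : ∀ a : A, D₁ (D₂ a) = D₂ (D₁ a))
    (hTD₁ : ∀ a : A, Tr (D₁ a) = 0) (hTD₂ : ∀ a : A, Tr (D₂ a) = 0) (a₀ a₁ a₂ : A) :
    derivPairCocycle Tr D₁ D₂ a₀ a₁ a₂ = derivPairCocycle Tr D₁ D₂ a₂ a₀ a₁ := by
  have hibp (D D' : A →ₗ[R] A) (hD : ∀ x y : A, D (x * y) = D x * y + x * D y)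
      (hTD : ∀ a : A, Tr (D a) = 0) :
      Tr (a₂ * (D a₀ * D' a₁)) = -Tr (a₀ * (D (D' a₁) * a₂)) - Tr (a₀ * (D' a₁ * D a₂)) := by
    rw [hTr, mul_assoc, trace_deriv_mul_eq_neg Tr D hD hTD, hD, mul_add, map_add]
    ring
  simp only [derivPairCocycle, mul_sub, map_sub, hibp D₁ D₂ hD₁ hTD₁, hibp D₂ D₁ hD₂ hTD₂, hcomm]
  ring

theorem derivPairCocycle_hochschild (hTr : ∀ x y : A, Tr (x * y) = Tr (y * x))
    (hD₁ : ∀ x y : A, D₁ (x * y) = D₁ x * y + x * D₁ y)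
    (hD₂ : ∀ x y : A, D₂ (x * y) = D₂ x * y + x * D₂ y) (a₀ a₁ a₂ a₃ : A) :
    derivPairCocycle Tr D₁ D₂ (a₀ * a₁) a₂ a₃ - derivPairCocycle Tr D₁ D₂ a₀ (a₁ * a₂) a₃
      + derivPairCocycle Tr D₁ D₂ a₀ a₁ (a₂ * a₃) - derivPairCocycle Tr D₁ D₂ (a₃ * a₀) a₁ a₂
      = 0 := by
  have hlast : derivPairCocycle Tr D₁ D₂ (a₃ * a₀) a₁ a₂
      = Tr (a₀ * ((D₁ a₁ * D₂ a₂ - D₂ a₁ * D₁ a₂) * a₃)) := by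
    rw [derivPairCocycle, mul_assoc, hTr, mul_assoc]
  rw [hlast]
  simp only [derivPairCocycle, hD₁, hD₂, ← map_sub, ← map_add]
  convert map_zero Tr using 2
  noncomm_ring

theorem derivPairCocycle_mul_alternating_rotations (hTr : ∀ x y : A, Tr (x * y) = Tr (y * x))
    (hD₁ : ∀ x y : A, D₁ (x * y) = D₁ x * y + x * D₁ y)
    (hD₂ : ∀ x y : A, D₂ (x * y) = D₂ x * y + x * D₂ y)
    (hcomm : ∀ a : A, D₁ (D₂ a) = D₂ (D₁ a))
    (hTD₁ : ∀ a : A, Tr (D₁ a) = 0) (hTD₂ : ∀ a : A, Tr (D₂ a) = 0) (a₀ a₁ a₂ a₃ : A) :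
    derivPairCocycle Tr D₁ D₂ (a₀ * a₁) a₂ a₃ - derivPairCocycle Tr D₁ D₂ (a₁ * a₂) a₃ a₀
      + derivPairCocycle Tr D₁ D₂ (a₂ * a₃) a₀ a₁ - derivPairCocycle Tr D₁ D₂ (a₃ * a₀) a₁ a₂
      = 0 := by
  have hrot := derivPairCocycle_rotate hTr hD₁ hD₂ hcomm hTD₁ hTD₂
  rw [hrot (a₁ * a₂), ← hrot a₀ a₁ (a₂ * a₃)]
  exact derivPairCocycle_hochschild hTr hD₁ hD₂ a₀ a₁ a₂ a₃

end DerivPairCocycle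

theorem Psi3_eq_derivPairCocycle {A : Type*} [Ring A] [Algebra ℂ A]
    {Tr : A →ₗ[ℂ] ℂ} {D₁ D₂ : A →ₗ[ℂ] A} (hTr : ∀ x y : A, Tr (x * y) = Tr (y * x))
    (hrot : ∀ a₀ a₁ a₂ : A,
      derivPairCocycle Tr D₁ D₂ a₀ a₁ a₂ = derivPairCocycle Tr D₁ D₂ a₂ a₀ a₁) (a b c : A) :
    Psi3 Tr D₁ D₂ a b c =
      3 * (derivPairCocycle Tr D₁ D₂ a b c - derivPairCocycle Tr D₁ D₂ a c b) := by
  have hterm (x y z : A) :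
      Tr (D₁ x * D₂ y * z) - Tr (D₂ x * D₁ y * z) = derivPairCocycle Tr D₁ D₂ z x y := by
    rw [derivPairCocycle, mul_sub, map_sub, hTr z, hTr z]
  simp only [Psi3, hterm]
  rw [Equiv.Perm.sum_fin_three_sign_mul fun i j k =>
    derivPairCocycle Tr D₁ D₂ (![a, b, c] k) (![a, b, c] i) (![a, b, c] j)]
  simp only [Matrix.cons_val]
  linear_combination hrot b c a - hrot a b c + hrot a c b - hrot c b a

theorem stmt_8 {A : Type*} [Ring A] [Algebra ℂ A]
    (Tr : A →ₗ[ℂ] ℂ) (hTr : ∀ x y : A, Tr (x * y) = Tr (y * x))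
    (D₁ D₂ : A →ₗ[ℂ] A)
    (hD₁ : ∀ x y : A, D₁ (x * y) = D₁ x * y + x * D₁ y)
    (hD₂ : ∀ x y : A, D₂ (x * y) = D₂ x * y + x * D₂ y)
    (hcomm : ∀ a : A, D₁ (D₂ a) = D₂ (D₁ a))
    (hTD₁ : ∀ a : A, Tr (D₁ a) = 0) (hTD₂ : ∀ a : A, Tr (D₂ a) = 0) :
    ∀ x₁ x₂ x₃ x₄ : A,
      - Psi3 Tr D₁ D₂ (x₁ * x₂ - x₂ * x₁) x₃ x₄
      + Psi3 Tr D₁ D₂ (x₁ * x₃ - x₃ * x₁) x₂ x₄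
      - Psi3 Tr D₁ D₂ (x₁ * x₄ - x₄ * x₁) x₂ x₃
      - Psi3 Tr D₁ D₂ (x₂ * x₃ - x₃ * x₂) x₁ x₄
      + Psi3 Tr D₁ D₂ (x₂ * x₄ - x₄ * x₂) x₁ x₃
      - Psi3 Tr D₁ D₂ (x₃ * x₄ - x₄ * x₃) x₁ x₂ = 0 := by
  have hrot := derivPairCocycle_rotate hTr hD₁ hD₂ hcomm hTD₁ hTD₂
  have hsum := derivPairCocycle_mul_alternating_rotations hTr hD₁ hD₂ hcomm hTD₁ hTD₂
  intro x₁ x₂ x₃ x₄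
  simp only [Psi3_eq_derivPairCocycle hTr hrot, derivPairCocycle_sub_left]
  linear_combination -3 * hsum x₁ x₂ x₃ x₄ + 3 * hsum x₁ x₂ x₄ x₃ + 3 * hsum x₁ x₃ x₂ x₄
    - 3 * hsum x₁ x₃ x₄ x₂ - 3 * hsum x₁ x₄ x₂ x₃ + 3 * hsum x₁ x₄ x₃ x₂
end

section
/- For a single derivation D, the 4-linear alternating map Ψ(a₁,a₂,a₃,a₄) = Σ_{σ∈S₄} sgn(σ) Tr(D(a_{σ(1)})·a_{σ(2)}·a_{σ(3)}·a_{σ(4)}) is a 4-cocycle on the Lie algebra A with bracket [a,b] = ab - ba: for all x₁,…,x₅ ∈ A, Σ_{1 ≤ i < j ≤ 5} (-1)^{i+j} Ψ([x_i,x_j], x₁, …, x̂_i, …, x̂_j, …, x₅) = 0. -/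
/-- `Ψ(a₁,a₂,a₃,a₄) = Σ_{σ∈S₄} sgn(σ) Tr(D(a_{σ(1)})·a_{σ(2)}·a_{σ(3)}·a_{σ(4)})`. -/
noncomputable def Psi4 {A : Type*} [Ring A] [Algebra ℂ A]
    (Tr : A →ₗ[ℂ] ℂ) (D : A →ₗ[ℂ] A) (a₁ a₂ a₃ a₄ : A) : ℂ :=
  ∑ σ : Equiv.Perm (Fin 4), ((Equiv.Perm.sign σ : ℤ) : ℂ) *
    Tr (D (![a₁, a₂, a₃, a₄] (σ 0)) * ![a₁, a₂, a₃, a₄] (σ 1) *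
        ![a₁, a₂, a₃, a₄] (σ 2) * ![a₁, a₂, a₃, a₄] (σ 3))

/-!
Expand each `Ψ` into its 24 terms, apply the Leibniz rule to the brackets' `D`, and use
`Tr (x * y) = Tr (y * x)` to rotate every product so that its `D`-factor comes first. In this
normal form the coboundary equals `-Σ_τ sgn τ · Tr (D (x₁ x_{τ 2} x_{τ 3} x_{τ 4} x_{τ 5}))`, the
sum running over the orderings `τ` of `x₂, …, x₅`, and every term vanishes because `Tr ∘ D = 0`.
-/

open Equiv

theorem Equiv.Perm.sum_fin_succ {M : Type*} [AddCommMonoid M] {n : ℕ}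
    (f : Perm (Fin (n + 1)) → M) :
    ∑ σ, f σ = ∑ p : Fin (n + 1), ∑ e : Perm (Fin n), f (Perm.decomposeFin.symm (p, e)) := by
  rw [← Equiv.sum_comp Perm.decomposeFin.symm f, Fintype.sum_prod_type]

theorem Equiv.Perm.sum_sign_mul_fin_four {R : Type*} [Ring R]
    (f : Fin 4 → Fin 4 → Fin 4 → Fin 4 → R) :
    ∑ σ : Perm (Fin 4), ((Perm.sign σ : ℤ) : R) * f (σ 0) (σ 1) (σ 2) (σ 3) =
      f 0 1 2 3 - f 0 1 3 2 - f 0 2 1 3 + f 0 2 3 1 + f 0 3 1 2 - f 0 3 2 1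
      - f 1 0 2 3 + f 1 0 3 2 + f 1 2 0 3 - f 1 2 3 0 - f 1 3 0 2 + f 1 3 2 0
      + f 2 0 1 3 - f 2 0 3 1 - f 2 1 0 3 + f 2 1 3 0 + f 2 3 0 1 - f 2 3 1 0
      - f 3 0 1 2 + f 3 0 2 1 + f 3 1 0 2 - f 3 1 2 0 - f 3 2 0 1 + f 3 2 1 0 := by
  simp only [Perm.sum_fin_succ, Fin.sum_univ_succ, Finset.univ_unique, Finset.sum_singleton,
    Perm.decomposeFin.symm_sign, Perm.decomposeFin_symm_apply_zero,
    Perm.decomposeFin_symm_apply_one, Perm.decomposeFin_symm_apply_succ,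
    show (2 : Fin 4) = (1 : Fin 3).succ from rfl, show (3 : Fin 4) = (2 : Fin 3).succ from rfl,
    show (2 : Fin 3) = (1 : Fin 2).succ from rfl]
  norm_num [swap_apply_def, Fin.ext_iff]
  abel

theorem Psi4_eq {A : Type*} [Ring A] [Algebra ℂ A] (Tr : A →ₗ[ℂ] ℂ) (D : A →ₗ[ℂ] A)
    (a b c d : A) :
    Psi4 Tr D a b c d =
      Tr (D a * b * c * d) - Tr (D a * b * d * c) - Tr (D a * c * b * d) + Tr (D a * c * d * b)
      + Tr (D a * d * b * c) - Tr (D a * d * c * b) - Tr (D b * a * c * d) + Tr (D b * a * d * c)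
      + Tr (D b * c * a * d) - Tr (D b * c * d * a) - Tr (D b * d * a * c) + Tr (D b * d * c * a)
      + Tr (D c * a * b * d) - Tr (D c * a * d * b) - Tr (D c * b * a * d) + Tr (D c * b * d * a)
      + Tr (D c * d * a * b) - Tr (D c * d * b * a) - Tr (D d * a * b * c) + Tr (D d * a * c * b)
      + Tr (D d * b * a * c) - Tr (D d * b * c * a) - Tr (D d * c * a * b) + Tr (D d * c * b * a) :=
  Perm.sum_sign_mul_fin_four fun i j k l ↦
    Tr (D (![a, b, c, d] i) * ![a, b, c, d] j * ![a, b, c, d] k * ![a, b, c, d] l)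

section Trace

variable {A M : Type*} [Semigroup A] {Tr : A → M} (D : A → A)

theorem trace_rotate (hTr : ∀ x y, Tr (x * y) = Tr (y * x)) (u v w y z : A) :
    Tr (u * (v * (w * (y * z)))) = Tr (v * (w * (y * (z * u)))) := by
  rw [hTr]; simp only [mul_assoc]

theorem trace_rotate_deriv₂ (hTr : ∀ x y, Tr (x * y) = Tr (y * x)) (u v w y z : A) :
    Tr (u * (D v * (w * (y * z)))) = Tr (D v * (w * (y * (z * u)))) :=
  trace_rotate hTr ..

theorem trace_rotate_deriv₃ (hTr : ∀ x y, Tr (x * y) = Tr (y * x)) (u v w y z : A) :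
    Tr (u * (v * (D w * (y * z)))) = Tr (D w * (y * (z * (u * v)))) := by
  rw [trace_rotate hTr, trace_rotate hTr]

theorem trace_rotate_deriv₄ (hTr : ∀ x y, Tr (x * y) = Tr (y * x)) (u v w y z : A) :
    Tr (u * (v * (w * (D y * z)))) = Tr (D y * (z * (u * (v * w)))) := by
  rw [trace_rotate hTr, trace_rotate hTr, trace_rotate hTr]

theorem trace_rotate_deriv₅ (hTr : ∀ x y, Tr (x * y) = Tr (y * x)) (u v w y z : A) :
    Tr (u * (v * (w * (y * D z)))) = Tr (D z * (u * (v * (w * y)))) := by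
  rw [trace_rotate hTr, trace_rotate hTr, trace_rotate hTr, trace_rotate hTr]

end Trace

theorem stmt_10 {A : Type*} [Ring A] [Algebra ℂ A]
    (Tr : A →ₗ[ℂ] ℂ) (hTr : ∀ x y : A, Tr (x * y) = Tr (y * x))
    (D : A →ₗ[ℂ] A) (hD : ∀ x y : A, D (x * y) = D x * y + x * D y)
    (hTD : ∀ a : A, Tr (D a) = 0) :
    ∀ x₁ x₂ x₃ x₄ x₅ : A,
      - Psi4 Tr D (x₁ * x₂ - x₂ * x₁) x₃ x₄ x₅
      + Psi4 Tr D (x₁ * x₃ - x₃ * x₁) x₂ x₄ x₅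
      - Psi4 Tr D (x₁ * x₄ - x₄ * x₁) x₂ x₃ x₅
      + Psi4 Tr D (x₁ * x₅ - x₅ * x₁) x₂ x₃ x₄
      - Psi4 Tr D (x₂ * x₃ - x₃ * x₂) x₁ x₄ x₅
      + Psi4 Tr D (x₂ * x₄ - x₄ * x₂) x₁ x₃ x₅
      - Psi4 Tr D (x₂ * x₅ - x₅ * x₂) x₁ x₃ x₄
      - Psi4 Tr D (x₃ * x₄ - x₄ * x₃) x₁ x₂ x₅
      + Psi4 Tr D (x₃ * x₅ - x₅ * x₃) x₁ x₂ x₄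
      - Psi4 Tr D (x₄ * x₅ - x₅ * x₄) x₁ x₂ x₃ = 0 := by
  intro x₁ x₂ x₃ x₄ x₅
  set y := ![x₂, x₃, x₄, x₅]
  calc _ = -∑ τ : Perm (Fin 4), ((Perm.sign τ : ℤ) : ℂ) *
        Tr (D (x₁ * y (τ 0) * y (τ 1) * y (τ 2) * y (τ 3))) := by
        rw [Perm.sum_sign_mul_fin_four fun i j k l ↦ Tr (D (x₁ * y i * y j * y k * y l))]
        simp only [Psi4_eq, y, Matrix.cons_val, map_sub, map_add, hD, sub_mul, mul_sub, add_mul,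
          mul_add, mul_assoc, trace_rotate_deriv₂ D hTr, trace_rotate_deriv₃ D hTr,
          trace_rotate_deriv₄ D hTr, trace_rotate_deriv₅ D hTr]
        ring
    _ = 0 := by simp [hTD]
end

section
/- The number of binary sequences (a₁,…,a_{n+2l}) ∈ {0,1}^{n+2l} such that a₁ = 1, exactly n entries equal 1 and exactly 2l entries equal 0, and every maximal cyclic run of consecutive 0's (viewing the sequence as arranged on a circle) has even length, equals the binomial coefficient C(n+l-1, n-1). -/
/-!
Because `a 0 = 1`, the cyclic runs of `0`'s are the linear runs of the word `a₀ … a_{N-1}`,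
and they all have even length iff every `1` is preceded by an even number of `0`'s and the
total number of `0`'s is even. These are exactly the words built from the blocks `1` and
`00`. Halving every block `00` is then a bijection onto the words of length `n + l` that
start with `1` and contain `n` ones, and there are `C(n + l - 1, n - 1)` of those.
-/

namespace ZeroRuns

def doubleFalses (c : List Bool) : List Bool :=
  c.flatMap fun b => bif b then [true] else [false, false]

@[simp] lemma doubleFalses_nil : doubleFalses [] = [] := rfl

@[simp] lemma doubleFalses_cons_true (c : List Bool) :
    doubleFalses (true :: c) = true :: doubleFalses c := rfl

@[simp] lemma doubleFalses_cons_false (c : List Bool) :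
    doubleFalses (false :: c) = false :: false :: doubleFalses c := rfl

lemma doubleFalses_injective : Function.Injective doubleFalses := by
  intro c₁
  induction c₁ with
  | nil => rintro (_ | ⟨_ | _, _⟩) h <;> simp_all
  | cons b c₁ ih =>
    rintro (_ | ⟨b', c₂⟩) h
    · cases b <;> simp at h
    · cases b <;> cases b' <;>
        simp only [doubleFalses_cons_true, doubleFalses_cons_false, List.cons.injEq, true_and,
          reduceCtorEq, false_and] at h ⊢ <;>
        exact ih h

@[simp] lemma count_true_doubleFalses (c : List Bool) :
    (doubleFalses c).count true = c.count true := by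
  induction c with
  | nil => rfl
  | cons b c ih => cases b <;> simp [ih]

lemma length_doubleFalses (c : List Bool) :
    (doubleFalses c).length = c.length + c.count false := by
  induction c with
  | nil => rfl
  | cons b c ih => cases b <;> simp [ih] <;> omega

lemma head?_doubleFalses_eq_some_true {c : List Bool} :
    (doubleFalses c).head? = some true ↔ c.head? = some true := by
  rcases c with _ | ⟨_ | _, c⟩ <;> simp

/-- For a word starting with `true`, this says that all maximal runs of `false` have even
length. -/
def EvenFalseRuns (w : List Bool) : Prop :=
  Even (w.count false) ∧ ∀ i (hi : i < w.length), w[i] = true → Even ((w.take i).count false)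

lemma evenFalseRuns_nil : EvenFalseRuns [] := by simp [EvenFalseRuns]

lemma evenFalseRuns_cons_true {w : List Bool} :
    EvenFalseRuns (true :: w) ↔ EvenFalseRuns w := by
  simp only [EvenFalseRuns, List.count_cons_of_ne (by decide : true ≠ false), List.length_cons]
  refine and_congr_right fun _ => ⟨fun h i hi hw => ?_, fun h i hi hw => ?_⟩
  · simpa using h (i + 1) (by omega) hw
  · cases i with
    | zero => simp
    | succ i => simpa using h i (by omega) hw

lemma evenFalseRuns_cons_false_cons_false {w : List Bool} :
    EvenFalseRuns (false :: false :: w) ↔ EvenFalseRuns w := by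
  simp only [EvenFalseRuns, List.count_cons_self, List.length_cons, Nat.even_add_one, not_not]
  refine and_congr_right fun _ => ⟨fun h i hi hw => ?_, fun h i hi hw => ?_⟩
  · simpa [Nat.even_add_one] using h (i + 2) (by omega) hw
  · rcases i with _ | _ | i
    · simp at hw
    · simp at hw
    · simpa [Nat.even_add_one] using h i (by simpa using hi) hw

lemma not_evenFalseRuns_singleton_false : ¬ EvenFalseRuns [false] := by
  simp [EvenFalseRuns]

lemma not_evenFalseRuns_false_cons_true (w : List Bool) :
    ¬ EvenFalseRuns (false :: true :: w) := fun h => by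
  simpa using h.2 1 (by simp) rfl

lemma mem_range_doubleFalses_of_evenFalseRuns :
    ∀ {w : List Bool}, EvenFalseRuns w → w ∈ Set.range doubleFalses
  | [], _ => ⟨[], rfl⟩
  | true :: _, h =>
    let ⟨c, hc⟩ := mem_range_doubleFalses_of_evenFalseRuns (evenFalseRuns_cons_true.1 h)
    ⟨true :: c, by rw [doubleFalses_cons_true, hc]⟩
  | [false], h => absurd h not_evenFalseRuns_singleton_false
  | false :: true :: w, h => absurd h (not_evenFalseRuns_false_cons_true w)
  | false :: false :: _, h =>
    let ⟨c, hc⟩ :=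
      mem_range_doubleFalses_of_evenFalseRuns (evenFalseRuns_cons_false_cons_false.1 h)
    ⟨false :: c, by rw [doubleFalses_cons_false, hc]⟩

theorem evenFalseRuns_iff_mem_range_doubleFalses {w : List Bool} :
    EvenFalseRuns w ↔ w ∈ Set.range doubleFalses := by
  refine ⟨mem_range_doubleFalses_of_evenFalseRuns, ?_⟩
  rintro ⟨c, rfl⟩
  induction c with
  | nil => exact evenFalseRuns_nil
  | cons b c ih =>
    cases b
    · exact evenFalseRuns_cons_false_cons_false.2 ih
    · exact evenFalseRuns_cons_true.2 ih

lemma count_false_take_add (w : List Bool) {i k : ℕ} (hk : 0 < k) (hik : i + k ≤ w.length)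
    (hi : w[i] = true) (hgap : ∀ m (_ : 0 < m) (_ : m < k), w[i + m] = false) :
    (w.take (i + k)).count false = (w.take i).count false + (k - 1) := by
  induction k with
  | zero => omega
  | succ k ih =>
    rw [← Nat.add_assoc, List.take_add_one, List.count_append,
      List.getElem?_eq_getElem (by omega)]
    rcases Nat.eq_zero_or_pos k with rfl | hk
    · simp [hi]
    · rw [ih hk (by omega) hi fun m hm hmk => hgap m hm (by omega), hgap k hk (by omega)]
      simp only [Option.toList_some, List.count_singleton_self]
      omega

lemma exists_last_lt_of_zero {P : ℕ → Prop} [DecidablePred P] (h0 : P 0) {j : ℕ}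
    (hj : 0 < j) : ∃ p < j, P p ∧ ∀ m, p < m → m < j → ¬ P m :=
  ⟨Nat.findGreatest P (j - 1), by have := Nat.findGreatest_le (P := P) (j - 1); omega,
    Nat.findGreatest_spec (Nat.zero_le _) h0,
    fun _ hpm hmj => Nat.findGreatest_is_greatest hpm (by omega)⟩

def CyclicOddGaps {N : ℕ} (a : Fin N → Bool) : Prop :=
  ∀ i : Fin N, a i = true → ∀ k : ℕ, 0 < k →
    (∀ m : ℕ, 0 < m → m < k → a ⟨(i.1 + m) % N, Nat.mod_lt _ i.pos⟩ = false) →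
    a ⟨(i.1 + k) % N, Nat.mod_lt _ i.pos⟩ = true → Odd k

/-- Index `j = N` stands for the wrap-around to `a 0`, so that the total number of `false`
entries is covered as well. -/
lemma even_count_false_take_of_cyclicOddGaps {N : ℕ} (hN : 0 < N) {a : Fin N → Bool}
    (h0 : a ⟨0, hN⟩ = true) (ha : CyclicOddGaps a) (j : ℕ) (hjN : j ≤ N)
    (hj : a ⟨j % N, Nat.mod_lt _ hN⟩ = true) :
    Even (((List.ofFn a).take j).count false) := by
  induction j using Nat.strong_induction_on with
  | _ j ih =>
  rcases Nat.eq_zero_or_pos j with rfl | hj0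
  · simp
  obtain ⟨p, hpj, hp, hgap⟩ :=
    exists_last_lt_of_zero (P := fun m => a ⟨m % N, Nat.mod_lt _ hN⟩ = true) (by simpa) hj0
  simp only [Bool.not_eq_true] at hgap
  have hpa : a ⟨p, by omega⟩ = true := by
    simpa [Nat.mod_eq_of_lt (show p < N by omega)] using hp
  have hgapa : ∀ m (_ : 0 < m) (_ : m < j - p), a ⟨p + m, by omega⟩ = false :=
    fun m hm hmk => by
      simpa [Nat.mod_eq_of_lt (show p + m < N by omega)] using hgap (p + m) (by omega) (by omega)
  have hodd : Odd (j - p) := by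
    refine ha ⟨p, by omega⟩ hpa (j - p) (by omega) (fun m hm hmk => ?_) ?_
    · simpa [Nat.mod_eq_of_lt (show p + m < N by omega)] using hgapa m hm hmk
    · simpa [show p + (j - p) = j by omega] using hj
  have hcount := count_false_take_add (List.ofFn a) (i := p) (k := j - p) (by omega)
    (by rw [List.length_ofFn]; omega) (by simpa using hpa) (fun m hm hmk => by simpa using hgapa m hm hmk)
  rw [show p + (j - p) = j by omega] at hcount
  rw [hcount]
  refine (ih p hpj (by omega) hp).add ?_
  obtain ⟨r, hr⟩ := hodd
  exact ⟨r, by omega⟩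

theorem cyclicOddGaps_iff_evenFalseRuns {N : ℕ} (hN : 0 < N) (a : Fin N → Bool)
    (h0 : a ⟨0, hN⟩ = true) : CyclicOddGaps a ↔ EvenFalseRuns (List.ofFn a) := by
  refine ⟨fun ha => ⟨?_, fun i hi hai => ?_⟩, fun ha i hi k hk hgap hend => ?_⟩
  · simpa [List.take_of_length_le] using
      even_count_false_take_of_cyclicOddGaps hN h0 ha N le_rfl (by simpa using h0)
  · rw [List.length_ofFn] at hi
    exact even_count_false_take_of_cyclicOddGaps hN h0 ha i hi.le
      (by simpa [Nat.mod_eq_of_lt hi] using hai)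
  · have hikN : i + k ≤ N := by
      by_contra hlt
      have := hgap (N - i) (by omega) (by omega)
      simp [show i.1 + (N - i) = N by omega, h0] at this
    have hcount := count_false_take_add (List.ofFn a) hk (by simpa using hikN)
      (by simpa using hi) fun m hm hmk => by
        simpa [Nat.mod_eq_of_lt (show i + m < N by omega)] using hgap m hm hmk
    have hend_even : Even (((List.ofFn a).take (i + k)).count false) := by
      rcases hikN.lt_or_eq with hlt | heq
      · exact ha.2 (i + k) (by simpa using hlt) (by simpa [Nat.mod_eq_of_lt hlt] using hend)
      · simpa [heq, List.take_of_length_le] using ha.1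
    obtain ⟨r, hr⟩ := ha.2 i (by simp) (by simpa using hi)
    obtain ⟨s, hs⟩ := hend_even
    exact ⟨s - r, by omega⟩

lemma count_ofFn {α : Type*} [DecidableEq α] {N : ℕ} (a : Fin N → α) (x : α) :
    (List.ofFn a).count x = (Finset.univ.filter fun i => a i = x).card := by
  induction N with
  | zero => simp
  | succ N ih =>
    rw [List.ofFn_succ, List.count_cons, ih, Fin.univ_succ, Finset.filter_cons]
    split_ifs <;> simp_all [Finset.filter_map]

lemma head?_ofFn {α : Type*} {N : ℕ} (hN : 0 < N) (a : Fin N → α) :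
    (List.ofFn a).head? = some (a ⟨0, hN⟩) := by
  simp [List.head?_eq_getElem?, hN]

lemma ncard_setOf_ofFn {α : Type*} {N : ℕ} (P : List α → Prop) :
    {a : Fin N → α | P (List.ofFn a)}.ncard = {w : List α | w.length = N ∧ P w}.ncard := by
  rw [← Set.ncard_image_of_injective _ List.ofFn_injective]
  congr 1
  ext w
  constructor
  · rintro ⟨a, ha, rfl⟩
    exact ⟨List.length_ofFn, ha⟩
  · rintro ⟨rfl, hw⟩
    exact ⟨w.get, by simpa [List.ofFn_get] using hw, List.ofFn_get w⟩

lemma ncard_setOf_cyclicOddGaps {N : ℕ} (hN : 0 < N) (n : ℕ) :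
    {a : Fin N → Bool | a ⟨0, hN⟩ = true ∧
      (Finset.univ.filter fun i => a i = true).card = n ∧ CyclicOddGaps a}.ncard =
    {w : List Bool | w.length = N ∧ w.head? = some true ∧ w.count true = n ∧
      EvenFalseRuns w}.ncard := by
  rw [← ncard_setOf_ofFn (fun w => w.head? = some true ∧ w.count true = n ∧ EvenFalseRuns w)]
  congr 1
  ext a
  simp only [Set.mem_ofPred_eq, head?_ofFn hN, Option.some_inj, count_ofFn]
  exact and_congr_right fun h0 => and_congr_right fun _ =>
    cyclicOddGaps_iff_evenFalseRuns hN a h0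

lemma setOf_evenFalseRuns_eq_image (n l : ℕ) :
    {w : List Bool | w.length = n + 2 * l ∧ w.head? = some true ∧ w.count true = n ∧
      EvenFalseRuns w} =
      doubleFalses '' {c | c.length = n + l ∧ c.head? = some true ∧ c.count true = n} := by
  ext w
  constructor
  · rintro ⟨hlen, hhead, hcount, hruns⟩
    obtain ⟨c, rfl⟩ := evenFalseRuns_iff_mem_range_doubleFalses.1 hruns
    have := List.count_true_add_count_false c
    simp only [length_doubleFalses, count_true_doubleFalses] at hlen hcount
    exact ⟨c, ⟨by omega, head?_doubleFalses_eq_some_true.1 hhead, hcount⟩, rfl⟩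
  · rintro ⟨c, ⟨hlen, hhead, hcount⟩, rfl⟩
    have := List.count_true_add_count_false c
    refine ⟨?_, head?_doubleFalses_eq_some_true.2 hhead, by simpa using hcount,
      evenFalseRuns_iff_mem_range_doubleFalses.2 ⟨c, rfl⟩⟩
    rw [length_doubleFalses]
    omega

lemma setOf_length_succ_count_true_zero (m : ℕ) :
    {c : List Bool | c.length = m + 1 ∧ c.count true = 0} =
      List.cons false '' {c | c.length = m ∧ c.count true = 0} := by
  ext (_ | ⟨_ | _, c⟩) <;> simp

lemma setOf_length_succ_count_true_succ (m k : ℕ) :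
    {c : List Bool | c.length = m + 1 ∧ c.count true = k + 1} =
      List.cons false '' {c | c.length = m ∧ c.count true = k + 1} ∪
        List.cons true '' {c | c.length = m ∧ c.count true = k} := by
  ext (_ | ⟨_ | _, c⟩) <;> simp

theorem ncard_setOf_length_count_true (m k : ℕ) :
    {c : List Bool | c.length = m ∧ c.count true = k}.ncard = m.choose k := by
  have hfin (m k : ℕ) : {c : List Bool | c.length = m ∧ c.count true = k}.Finite :=
    (List.finite_length_eq Bool m).subset fun c hc => hc.1
  induction m generalizing k with
  | zero =>
    rcases k with _ | k
    · rw [show {c : List Bool | c.length = 0 ∧ c.count true = 0} = {[]} by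
        ext (_ | _) <;> simp]
      simp
    · refine (Set.ncard_eq_zero (hfin 0 _)).2 (Set.eq_empty_of_forall_notMem ?_)
      simp +contextual [List.length_eq_zero_iff]
  | succ m ih =>
    rcases k with _ | k
    · rw [setOf_length_succ_count_true_zero, Set.ncard_image_of_injective _ List.cons_injective,
        ih, Nat.choose_zero_right, Nat.choose_zero_right]
    · rw [setOf_length_succ_count_true_succ,
        Set.ncard_union_eq ?_ ((hfin m _).image _) ((hfin m _).image _),
        Set.ncard_image_of_injective _ List.cons_injective,
        Set.ncard_image_of_injective _ List.cons_injective, ih, ih, Nat.choose_succ_succ', add_comm]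
      exact Set.disjoint_left.2 fun _ ⟨_, _, h⟩ ⟨_, _, h'⟩ => by simp [← h] at h'

lemma ncard_setOf_length_head?_count_true (m k : ℕ) :
    {c : List Bool | c.length = m + 1 ∧ c.head? = some true ∧ c.count true = k + 1}.ncard =
      m.choose k := by
  calc _ = (List.cons true '' {c : List Bool | c.length = m ∧ c.count true = k}).ncard := by
        congr 1
        ext (_ | ⟨_ | _, c⟩) <;> simp
    _ = m.choose k := by
      rw [Set.ncard_image_of_injective _ List.cons_injective, ncard_setOf_length_count_true]

end ZeroRuns

open ZeroRuns in
theorem stmt_11 (n l : ℕ) (hn : 1 ≤ n) :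
    Set.ncard {a : Fin (n + 2 * l) → Bool |
      a ⟨0, by omega⟩ = true ∧
      (Finset.univ.filter (fun i => a i = true)).card = n ∧
      -- every maximal cyclic run of 0's has even length: equivalently, for each
      -- index `i` with `a i = true`, the distance `k` to the next `true` entry
      -- (cyclically) is odd, i.e. the gap of 0's between them has even length
      (∀ i : Fin (n + 2 * l), a i = true →
        ∀ k : ℕ, 0 < k →
          (∀ m : ℕ, 0 < m → m < k →
            a ⟨(i.1 + m) % (n + 2 * l), Nat.mod_lt _ (by omega)⟩ = false) →
          a ⟨(i.1 + k) % (n + 2 * l), Nat.mod_lt _ (by omega)⟩ = true →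
          Odd k)} = Nat.choose (n + l - 1) (n - 1) := by
  have hN : 0 < n + 2 * l := by omega
  show Set.ncard {a : Fin (n + 2 * l) → Bool | a ⟨0, hN⟩ = true ∧ _ ∧ CyclicOddGaps a} = _
  rw [ncard_setOf_cyclicOddGaps hN, setOf_evenFalseRuns_eq_image,
    Set.ncard_image_of_injective _ doubleFalses_injective]
  obtain ⟨n, rfl⟩ : ∃ k, n = k + 1 := ⟨n - 1, by omega⟩
  simpa [show n + 1 + l = n + l + 1 by ring] using ncard_setOf_length_head?_count_true (n + l) n
end
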